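/- Let (T,χ) be a lenient tree decomposition of G with |V(T)| ≥ 3, let S be a connected vertex set of G, and let t, t′, t″ be nodes of T such that t′ is an internal node of the unique path in T from t to t″. If χ(t) ∩ S ≠ ∅ and χ(t″) ∩ S ≠ ∅, then χ(t′) ∩ S ≠ ∅. -/

import Mathlib

open SimpleGraph

section Defs

variable {V W : Type}

/-- `X` covers the family `B`: every member of `B` meets `X`. -/
def Covers (X : Set V) (B : Set (Set V)) : Prop := ∀ S ∈ B, (S ∩ X).Nonempty

/-- A strict bramble: a family of connected vertex sets, pairwise intersecting. -/
def IsStrictBramble (G : SimpleGraph V) (B : Set (Set V)) : Prop :=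
  (∀ S ∈ B, (G.induce S).Connected) ∧ ∀ S ∈ B, ∀ S' ∈ B, (S ∩ S').Nonempty

/-- Two vertex sets touch: they intersect or are joined by an edge. -/
def Touches (G : SimpleGraph V) (S S' : Set V) : Prop :=
  (S ∩ S').Nonempty ∨ ∃ u ∈ S, ∃ v ∈ S', G.Adj u v

/-- A bramble: a family of connected vertex sets, pairwise touching. -/
def IsBramble (G : SimpleGraph V) (B : Set (Set V)) : Prop :=
  (∀ S ∈ B, (G.induce S).Connected) ∧ ∀ S ∈ B, ∀ S' ∈ B, Touches G S S'

/-- The order of a family of vertex sets: minimum size of a covering set. -/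
noncomputable def brOrder (B : Set (Set V)) : ℕ :=
  sInf {n | ∃ X : Set V, Covers X B ∧ X.ncard = n}

/-- The strict bramble number. -/
noncomputable def sbn (G : SimpleGraph V) : ℕ :=
  sSup {n | ∃ B, IsStrictBramble G B ∧ brOrder B = n}

/-- The bramble number. -/
noncomputable def bn (G : SimpleGraph V) : ℕ :=
  sSup {n | ∃ B, IsBramble G B ∧ brOrder B = n}

/-- `S` is an `(x,y)`-separator: `x, y ∉ S` and `x, y` lie in different
components of `G − S`. -/
def SepPair (G : SimpleGraph V) (x y : V) (S : Set V) : Prop :=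
  x ∉ S ∧ y ∉ S ∧ ∀ (hx : x ∈ Sᶜ) (hy : y ∈ Sᶜ),
    ¬ (G.induce Sᶜ).Reachable ⟨x, hx⟩ ⟨y, hy⟩

/-- `S` is an `(X,Y)`-separator of `G`. -/
def IsSetSeparator (G : SimpleGraph V) (X Y S : Set V) : Prop :=
  ∀ x ∈ X \ S, ∀ y ∈ Y \ S, SepPair G x y S

/-- A lenient tree decomposition of `G`. -/
structure LenientTD (G : SimpleGraph V) where
  ι : Type
  T : SimpleGraph ι
  tree : T.IsTree
  χ : ι → Set V
  covers : ∀ v : V, ∃ t, v ∈ χ t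
  edge_mem : ∀ u v : V, G.Adj u v →
    ∃ t t', (t = t' ∨ T.Adj t t') ∧ u ∈ χ t ∪ χ t' ∧ v ∈ χ t ∪ χ t'
  trace_conn : ∀ v : V, (T.induce {t | v ∈ χ t}).Connected

/-- The width of a lenient tree decomposition is at most `k`. -/
def LenientTD.WidthLE {G : SimpleGraph V} (D : LenientTD G) (k : ℕ) : Prop :=
  ∀ t, (D.χ t).ncard ≤ k

/-- An ordinary tree decomposition of `G`. -/
structure TreeDecomp (G : SimpleGraph V) where
  ι : Type
  T : SimpleGraph ι
  tree : T.IsTree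
  χ : ι → Set V
  covers : ∀ v : V, ∃ t, v ∈ χ t
  edge_mem : ∀ u v : V, G.Adj u v → ∃ t, u ∈ χ t ∧ v ∈ χ t
  trace_conn : ∀ v : V, (T.induce {t | v ∈ χ t}).Connected

/-- Treewidth: minimum over tree decompositions of (max bag size − 1). -/
noncomputable def tw (G : SimpleGraph V) : ℕ :=
  sInf {k | ∃ D : TreeDecomp G, ∀ t, (D.χ t).ncard ≤ k + 1}

/-- A minor model of `H` in `G`. -/
def IsMinorModel (H : SimpleGraph W) (G : SimpleGraph V) (μ : W → Set V) : Prop :=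
  (∀ w, (G.induce (μ w)).Connected) ∧
  (∀ w w', w ≠ w' → μ w ∩ μ w' = ∅) ∧
  (∀ w w', H.Adj w w' → ∃ u ∈ μ w, ∃ v ∈ μ w', G.Adj u v)

/-- `H` is a minor of `G`. -/
def IsMinorOf (H : SimpleGraph W) (G : SimpleGraph V) : Prop :=
  ∃ μ : W → Set V, IsMinorModel H G μ

/-- The lexicographic product `T · K_k`. -/
def lexK {ι : Type} (T : SimpleGraph ι) (k : ℕ) : SimpleGraph (ι × Fin k) where
  Adj a b := T.Adj a.1 b.1 ∨ (a.1 = b.1 ∧ a.2 ≠ b.2)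
  symm := Std.Symm.mk <| by
    rintro a b (h | ⟨h1, h2⟩)
    · exact Or.inl h.symm
    · exact Or.inr ⟨h1.symm, h2.symm⟩
  loopless := Std.Irrefl.mk <| by
    rintro a (h | ⟨_, h2⟩)
    · exact T.loopless.irrefl _ h
    · exact h2 rfl

/-- The lexicographic tree product number. -/
noncomputable def ltp (G : SimpleGraph V) : ℕ :=
  sInf {m | ∃ (ι : Type) (T : SimpleGraph ι), T.IsTree ∧ IsMinorOf G (lexK T m)}

/-- The `(T,χ)`-completion of `G`: make each union of two close bags a clique. -/
def LenientTD.completion {G : SimpleGraph V} (D : LenientTD G) : SimpleGraph V where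
  Adj u v := u ≠ v ∧ ∃ t t', (t = t' ∨ D.T.Adj t t') ∧
    u ∈ D.χ t ∪ D.χ t' ∧ v ∈ D.χ t ∪ D.χ t'
  symm := Std.Symm.mk <| by
    rintro u v ⟨hne, t, t', hc, hu, hv⟩
    exact ⟨hne.symm, t, t', hc, hv, hu⟩
  loopless := Std.Irrefl.mk fun u h => h.1 rfl

/-- `G` is chordal: every cycle of length at least four has a chord. -/
def IsChordal (G : SimpleGraph V) : Prop :=
  ∀ (v : V) (w : G.Walk v v), w.IsCycle → 4 ≤ w.length →
    ∃ x ∈ w.support, ∃ y ∈ w.support, G.Adj x y ∧ s(x, y) ∉ w.edges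

end Defs

/-! The nodes of `T` whose bags meet a connected set `S` span a subtree: the nodes whose bags
contain a given vertex of `S` form a subtree, and the ends of an edge of `G[S]` lie in close
bags. In a tree, a subtree containing `t` and `t''` contains the unique path between them. -/

namespace SimpleGraph

theorem IsAcyclic.mem_of_mem_support_of_reachable_induce {ι : Type*} {T : SimpleGraph ι}
    (hT : T.IsAcyclic) {U : Set ι} {u v : ι} {hu : u ∈ U} {hv : v ∈ U}
    (h : (T.induce U).Reachable ⟨u, hu⟩ ⟨v, hv⟩) (p : T.Walk u v) (hp : p.IsPath)
    {w : ι} (hw : w ∈ p.support) : w ∈ U := by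
  classical
  obtain ⟨q⟩ := h
  let q' := (q.map (Embedding.induce U).toHom).bypass
  have hpq : p = q' :=
    congrArg Subtype.val <| (hT.subsingleton_path u v).elim ⟨p, hp⟩ ⟨q', Walk.bypass_isPath _⟩
  have hw' : w ∈ (q.map (Embedding.induce U).toHom).support :=
    Walk.support_bypass_subset_support _ (by rwa [hpq] at hw)
  rw [Walk.support_map, List.mem_map] at hw'
  obtain ⟨z, -, rfl⟩ := hw'
  exact z.2

end SimpleGraph

section LenientTD

variable {V : Type} {G : SimpleGraph V} (D : LenientTD G)

def LenientTD.nodesMeeting (S : Set V) : Set D.ι := {s | (D.χ s ∩ S).Nonempty}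

variable {D} {S : Set V}

theorem LenientTD.reachable_of_mem_bags {x : V} (hx : x ∈ S) {s s' : D.ι} (hs : x ∈ D.χ s)
    (hs' : x ∈ D.χ s') :
    (D.T.induce (D.nodesMeeting S)).Reachable ⟨s, x, hs, hx⟩ ⟨s', x, hs', hx⟩ := by
  have htrace : {t | x ∈ D.χ t} ⊆ D.nodesMeeting S := fun _ ht => ⟨x, ht, hx⟩
  exact ((D.trace_conn x).preconnected ⟨s, hs⟩ ⟨s', hs'⟩).map (induceHomOfLE D.T htrace).toHom

theorem LenientTD.reachable_of_adj {x y : V} (hx : x ∈ S) (hy : y ∈ S) (hxy : G.Adj x y)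
    {s s' : D.ι} (hs : x ∈ D.χ s) (hs' : y ∈ D.χ s') :
    (D.T.induce (D.nodesMeeting S)).Reachable ⟨s, x, hs, hx⟩ ⟨s', y, hs', hy⟩ := by
  obtain ⟨a, b, hab, ha, hb⟩ : ∃ a b, (a = b ∨ D.T.Adj a b) ∧ x ∈ D.χ a ∧ y ∈ D.χ b := by
    obtain ⟨r, r', hclose, hxr | hxr, hyr | hyr⟩ := D.edge_mem x y hxy
    exacts [⟨r, r, .inl rfl, hxr, hyr⟩, ⟨r, r', hclose, hxr, hyr⟩,
      ⟨r', r, hclose.imp Eq.symm Adj.symm, hxr, hyr⟩, ⟨r', r', .inl rfl, hxr, hyr⟩]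
  have hclose : (D.T.induce (D.nodesMeeting S)).Reachable ⟨a, x, ha, hx⟩ ⟨b, y, hb, hy⟩ := by
    rcases hab with rfl | hab
    exacts [reachable_of_mem_bags hx ha ha, Adj.reachable hab]
  exact (reachable_of_mem_bags hx hs ha).trans (hclose.trans (reachable_of_mem_bags hy hb hs'))

theorem LenientTD.reachable_of_walk {x y : S} (w : (G.induce S).Walk x y) {s s' : D.ι}
    (hs : ↑x ∈ D.χ s) (hs' : ↑y ∈ D.χ s') :
    (D.T.induce (D.nodesMeeting S)).Reachable ⟨s, x, hs, x.2⟩ ⟨s', y, hs', y.2⟩ := by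
  induction w generalizing s with
  | nil => exact reachable_of_mem_bags (Subtype.prop _) hs hs'
  | @cons x z y hxz _ ih =>
    obtain ⟨r, hr⟩ := D.covers z
    exact (reachable_of_adj x.2 z.2 hxz hs hr).trans (ih hr hs')

theorem LenientTD.preconnected_induce_nodesMeeting (hS : (G.induce S).Preconnected) :
    (D.T.induce (D.nodesMeeting S)).Preconnected := by
  rintro ⟨s, x, hxs, hx⟩ ⟨s', y, hys, hy⟩
  obtain ⟨w⟩ := hS ⟨x, hx⟩ ⟨y, hy⟩
  exact D.reachable_of_walk w hxs hys

end LenientTD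

theorem connected_set_meets_internal_bag_general {V : Type}
    (G : SimpleGraph V) (D : LenientTD G)
    (S : Set V) (hS : (G.induce S).Connected)
    (t t' t'' : D.ι) (p : D.T.Walk t t'') (hp : p.IsPath)
    (ht' : t' ∈ p.support)
    (hts : (D.χ t ∩ S).Nonempty) (ht''s : (D.χ t'' ∩ S).Nonempty) :
    (D.χ t' ∩ S).Nonempty :=
  D.tree.isAcyclic.mem_of_mem_support_of_reachable_induce
    (D.preconnected_induce_nodesMeeting hS.preconnected ⟨t, hts⟩ ⟨t'', ht''s⟩) p hp ht'

/-- a connected set meeting the bags of the endpoints of a path in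
`T` also meets the bag of every internal node of that path. -/
theorem connected_set_meets_internal_bag {V : Type} [Fintype V]
    (G : SimpleGraph V) (D : LenientTD G) (hT : 3 ≤ Nat.card D.ι)
    (S : Set V) (hS : (G.induce S).Connected)
    (t t' t'' : D.ι) (p : D.T.Walk t t'') (hp : p.IsPath)
    (ht' : t' ∈ p.support) (h1 : t' ≠ t) (h2 : t' ≠ t'')
    (hts : (D.χ t ∩ S).Nonempty) (ht''s : (D.χ t'' ∩ S).Nonempty) :
    (D.χ t' ∩ S).Nonempty :=
  connected_set_meets_internal_bag_general G D S hS t t' t'' p hp ht' hts ht''s
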